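/- For an integer k ≥ 1, let H(b,k) = Σ_{j=b+1}^{k} 1/j (with H(k,k) = 0) and define θ₁(k) = Σ_{b=1}^{k} 1/( b·(1 + H(b,k)) ). Then lim_{k→∞} ( θ₁(k) − log(1 + log k) ) = 0. -/

import Mathlib

open Finset Filter Real

/-- The tail harmonic sum `H(b,k) = ∑_{j=b+1}^{k} 1/j`, with `H(k,k) = 0`. -/
noncomputable def Htail (b k : ℕ) : ℝ := ∑ j ∈ Finset.Icc (b + 1) k, (1 : ℝ) / (j : ℝ)

lemma htail_nonneg (b k : ℕ) : 0 ≤ Htail b k := by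
  apply Finset.sum_nonneg; intro j hj; positivity

lemma htail_self (k : ℕ) : Htail k k = 0 := by
  simp [Htail]

lemma htail_eq (b k : ℕ) (h : b ≤ k) :
    Htail b k = (harmonic k : ℝ) - (harmonic b : ℝ) := by
  have h1 : Htail 0 b + Htail b k = Htail 0 k := by
    simp only [Htail, Finset.Icc_add_one_left_eq_Ioc]
    exact Finset.sum_Ioc_consecutive _ (Nat.zero_le b) h
  have h2 : ∀ n : ℕ, Htail 0 n = (harmonic n : ℝ) := by
    intro n
    rw [Htail, harmonic_eq_sum_Icc]
    push_cast
    simp [one_div]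
  rw [h2, h2] at h1
  linarith

lemma htail_anti {b c : ℕ} (k : ℕ) (h : b ≤ c) : Htail c k ≤ Htail b k := by
  apply Finset.sum_le_sum_of_subset_of_nonneg
  · exact Finset.Icc_subset_Icc (by omega) le_rfl
  · intro j _ _; positivity

lemma htail_lower {b k : ℕ} (hb : 1 ≤ b) (hbk : b ≤ k) :
    Real.log (k + 1) - (1 + Real.log b) ≤ Htail b k := by
  rw [htail_eq b k hbk]
  have h1 : Real.log (k + 1) ≤ (harmonic k : ℝ) := by
    have := log_add_one_le_harmonic k
    push_cast at this ⊢
    linarith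
  have h2 : (harmonic b : ℝ) ≤ 1 + Real.log b := harmonic_le_one_add_log b
  linarith

/-- per-term step: `Htail (b-1) k = Htail b k + 1/b`. -/
lemma htail_step {b k : ℕ} (hb : 1 ≤ b) (hbk : b ≤ k) :
    Htail (b - 1) k = Htail b k + 1 / (b : ℝ) := by
  have hb1 : b - 1 + 1 = b := by omega
  rw [Htail, Htail, hb1]
  have : Finset.Icc b k = insert b (Finset.Icc (b + 1) k) := by
    rw [Finset.Icc_add_one_left_eq_Ioc, ← Finset.Ioc_insert_left hbk]
  rw [this, Finset.sum_insert (by simp)]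
  ring


lemma log_one_add_le {x : ℝ} (hx : 0 ≤ x) : Real.log (1 + x) ≤ x := by
  have := Real.log_le_sub_one_of_pos (show (0:ℝ) < 1 + x by linarith)
  linarith

lemma le_log_one_add {x : ℝ} (hx : 0 ≤ x) : x - x ^ 2 ≤ Real.log (1 + x) := by
  have h1 : (0:ℝ) < 1 + x := by linarith
  have h2 := Real.log_le_sub_one_of_pos (show (0:ℝ) < (1 + x)⁻¹ by positivity)
  rw [Real.log_inv] at h2
  have h3 : (1 + x)⁻¹ * (1 + x) = 1 := inv_mul_cancel₀ (ne_of_gt h1)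
  nlinarith [sq_nonneg x, mul_pos h1 h1]

lemma term_factor {b k : ℕ} (hb : 1 ≤ b) (hbk : b ≤ k) :
    1 + Htail (b - 1) k = (1 + Htail b k) * (1 + 1 / ((b : ℝ) * (1 + Htail b k))) := by
  have hbpos : (0:ℝ) < b := by exact_mod_cast hb
  have hA : (0:ℝ) < 1 + Htail b k := by have := htail_nonneg b k; linarith
  rw [htail_step hb hbk]
  field_simp
  ring

lemma term_diff_eq {b k : ℕ} (hb : 1 ≤ b) (hbk : b ≤ k) :
    Real.log (1 + Htail (b - 1) k) - Real.log (1 + Htail b k)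
      = Real.log (1 + 1 / ((b : ℝ) * (1 + Htail b k))) := by
  have hbpos : (0:ℝ) < b := by exact_mod_cast hb
  have hA : (0:ℝ) < 1 + Htail b k := by have := htail_nonneg b k; linarith
  have hx : (0:ℝ) < 1 / ((b : ℝ) * (1 + Htail b k)) := by positivity
  rw [term_factor hb hbk, Real.log_mul (ne_of_gt hA) (by linarith)]
  ring

lemma telescope (k : ℕ) :
    ∑ b ∈ Finset.Icc 1 k,
        (Real.log (1 + Htail (b - 1) k) - Real.log (1 + Htail b k))
      = Real.log (1 + Htail 0 k) := by
  have h1 : Finset.Icc 1 k = Finset.Ico 1 (k + 1) := by rw [Finset.Ico_add_one_right_eq_Icc]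
  rw [h1, Finset.sum_Ico_eq_sum_range]
  simp only [Nat.add_sub_cancel]
  have h2 : ∀ i ∈ Finset.range k,
      Real.log (1 + Htail (1 + i - 1) k) - Real.log (1 + Htail (1 + i) k)
        = (fun j => Real.log (1 + Htail j k)) i - (fun j => Real.log (1 + Htail j k)) (i + 1) := by
    intro i _
    simp only [add_comm 1 i, Nat.add_sub_cancel]
  rw [Finset.sum_congr rfl h2, Finset.sum_range_sub']
  simp [htail_self]

lemma theta_ge {k : ℕ} :
    Real.log (1 + Htail 0 k) ≤ ∑ b ∈ Finset.Icc 1 k, 1 / ((b : ℝ) * (1 + Htail b k)) := by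
  rw [← telescope k]
  apply Finset.sum_le_sum
  intro b hb
  rw [Finset.mem_Icc] at hb
  rw [term_diff_eq hb.1 hb.2]
  have hbpos : (0:ℝ) < b := by exact_mod_cast hb.1
  have hA : (0:ℝ) < 1 + Htail b k := by have := htail_nonneg b k; linarith
  exact log_one_add_le (by positivity)

lemma theta_le {k : ℕ} :
    ∑ b ∈ Finset.Icc 1 k, 1 / ((b : ℝ) * (1 + Htail b k))
      ≤ Real.log (1 + Htail 0 k)
        + ∑ b ∈ Finset.Icc 1 k, (1 / ((b : ℝ) * (1 + Htail b k))) ^ 2 := by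
  rw [← telescope k, ← Finset.sum_add_distrib]
  apply Finset.sum_le_sum
  intro b hb
  rw [Finset.mem_Icc] at hb
  rw [term_diff_eq hb.1 hb.2]
  have hbpos : (0:ℝ) < b := by exact_mod_cast hb.1
  have hA : (0:ℝ) < 1 + Htail b k := by have := htail_nonneg b k; linarith
  have := le_log_one_add (show (0:ℝ) ≤ 1 / ((b : ℝ) * (1 + Htail b k)) by positivity)
  linarith


lemma sum_inv_sq_tail {m : ℕ} (hm : 1 ≤ m) : ∀ n, m ≤ n →
    ∑ b ∈ Finset.Icc (m + 1) n, (1 : ℝ) / (b : ℝ) ^ 2 ≤ 1 / m - 1 / n := by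
  intro n hn
  induction n, hn using Nat.le_induction with
  | base => simp
  | succ n hn ih =>
    rw [Finset.sum_Icc_succ_top (by omega)]
    have hn1 : (1:ℝ) ≤ n := by exact_mod_cast le_trans hm hn
    have hn0 : (0:ℝ) < n := by linarith
    have heq : 1 / (n:ℝ) - 1 / ((n:ℝ) + 1) = 1 / ((n:ℝ) * ((n:ℝ) + 1)) := by
      field_simp
      ring
    have h1 : (1:ℝ) / ((n:ℝ) + 1) ^ 2 ≤ 1 / n - 1 / (n + 1) := by
      rw [heq]
      exact one_div_le_one_div_of_le (by positivity) (by nlinarith)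
    push_cast
    linarith

lemma sum_inv_sq_tail' {m : ℕ} (hm : 1 ≤ m) (n : ℕ) :
    ∑ b ∈ Finset.Icc (m + 1) n, (1 : ℝ) / (b : ℝ) ^ 2 ≤ 1 / m := by
  rcases le_or_gt m n with h | h
  · have h2 := sum_inv_sq_tail hm n h
    have hn : (0:ℝ) < n := by exact_mod_cast lt_of_lt_of_le (by omega : 0 < m) h
    have h3 : (0:ℝ) ≤ 1 / n := by positivity
    linarith
  · rw [Finset.Icc_eq_empty (by omega), Finset.sum_empty]
    positivity

lemma sum_inv_sq_head (n : ℕ) :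
    ∑ b ∈ Finset.Icc 1 n, (1 : ℝ) / (b : ℝ) ^ 2 ≤ 2 := by
  rcases Nat.eq_zero_or_pos n with h | h
  · subst h; simp
  · have hsplit : Finset.Icc 1 n = insert 1 (Finset.Icc 2 n) := by
      ext x
      simp only [Finset.mem_Icc, Finset.mem_insert]
      omega
    rw [hsplit, Finset.sum_insert (by simp)]
    have ht := sum_inv_sq_tail' (le_refl 1) n
    norm_num at ht ⊢
    linarith

lemma S_bound {k : ℕ} (hk : 1 ≤ k) :
    ∑ b ∈ Finset.Icc 1 k, (1 / ((b : ℝ) * (1 + Htail b k))) ^ 2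
      ≤ 2 / (1 + Htail (Nat.sqrt k) k) ^ 2 + 1 / (Nat.sqrt k : ℝ) := by
  set m := Nat.sqrt k with hm
  have hm1 : 1 ≤ m := Nat.sqrt_pos.mpr hk
  have hmk : m ≤ k := Nat.sqrt_le_self k
  have hAm : (0:ℝ) < 1 + Htail m k := by have := htail_nonneg m k; linarith
  have hsplit : ∑ b ∈ Finset.Icc 1 k, (1 / ((b : ℝ) * (1 + Htail b k))) ^ 2
      = ∑ b ∈ Finset.Icc 1 m, (1 / ((b : ℝ) * (1 + Htail b k))) ^ 2
        + ∑ b ∈ Finset.Icc (m + 1) k, (1 / ((b : ℝ) * (1 + Htail b k))) ^ 2 := by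
    rw [show Finset.Icc 1 k = Finset.Ioc 0 k from Finset.Icc_add_one_left_eq_Ioc _ _,
      show Finset.Icc 1 m = Finset.Ioc 0 m from Finset.Icc_add_one_left_eq_Ioc _ _,
      show Finset.Icc (m + 1) k = Finset.Ioc m k from Finset.Icc_add_one_left_eq_Ioc _ _]
    exact (Finset.sum_Ioc_consecutive _ (Nat.zero_le m) hmk).symm
  rw [hsplit]
  have part1 : ∑ b ∈ Finset.Icc 1 m, (1 / ((b : ℝ) * (1 + Htail b k))) ^ 2
      ≤ 2 / (1 + Htail m k) ^ 2 := by
    have step : ∀ b ∈ Finset.Icc 1 m, (1 / ((b : ℝ) * (1 + Htail b k))) ^ 2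
        ≤ (1 / (b : ℝ) ^ 2) * (1 / (1 + Htail m k) ^ 2) := by
      intro b hb
      rw [Finset.mem_Icc] at hb
      have hbpos : (0:ℝ) < b := by exact_mod_cast hb.1
      have hAb : (0:ℝ) < 1 + Htail b k := by have := htail_nonneg b k; linarith
      have hmono : 1 + Htail m k ≤ 1 + Htail b k := by
        have := htail_anti k hb.2 (c := m); linarith
      have heq : (1:ℝ) / ((b:ℝ) ^ 2 * (1 + Htail m k) ^ 2)
          = 1 / (b:ℝ) ^ 2 * (1 / (1 + Htail m k) ^ 2) := by
        rw [one_div, one_div, one_div, mul_inv]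
      rw [div_pow, one_pow, mul_pow, ← heq]
      exact one_div_le_one_div_of_le (by positivity)
        (mul_le_mul_of_nonneg_left (pow_le_pow_left₀ hAm.le hmono 2) (by positivity))
    calc ∑ b ∈ Finset.Icc 1 m, (1 / ((b : ℝ) * (1 + Htail b k))) ^ 2
        ≤ ∑ b ∈ Finset.Icc 1 m, (1 / (b : ℝ) ^ 2) * (1 / (1 + Htail m k) ^ 2) :=
          Finset.sum_le_sum step
      _ = (∑ b ∈ Finset.Icc 1 m, (1 : ℝ) / (b : ℝ) ^ 2) * (1 / (1 + Htail m k) ^ 2) := by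
          rw [Finset.sum_mul]
      _ ≤ 2 * (1 / (1 + Htail m k) ^ 2) := by
          apply mul_le_mul_of_nonneg_right (sum_inv_sq_head m) (by positivity)
      _ = 2 / (1 + Htail m k) ^ 2 := by ring
  have part2 : ∑ b ∈ Finset.Icc (m + 1) k, (1 / ((b : ℝ) * (1 + Htail b k))) ^ 2
      ≤ 1 / (m : ℝ) := by
    refine le_trans (Finset.sum_le_sum ?_) (sum_inv_sq_tail' hm1 k)
    intro b hb
    rw [Finset.mem_Icc] at hb
    have hbpos : (0:ℝ) < b := by exact_mod_cast (by omega : 1 ≤ b)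
    have hAb : (0:ℝ) ≤ Htail b k := htail_nonneg b k
    rw [div_pow, one_pow, mul_pow]
    exact one_div_le_one_div_of_le (by positivity)
      (le_mul_of_one_le_right (by positivity) (by nlinarith))
  linarith

/-- The weight `θ₁(k) = ∑_{b=1}^{k} 1/(b·(1 + H(b,k)))` of the largest observation in the
averaged trimmed Hill estimator satisfies `θ₁(k) − log(1 + log k) → 0` as `k → ∞`. -/
theorem theta_one_asymptotics :
    Filter.Tendsto
      (fun k : ℕ =>
        (∑ b ∈ Finset.Icc 1 k, 1 / ((b : ℝ) * (1 + Htail b k)))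
          - Real.log (1 + Real.log (k : ℝ)))
      Filter.atTop (nhds 0) := by
  have hlogk : Tendsto (fun k : ℕ => Real.log k) atTop atTop :=
    Real.tendsto_log_atTop.comp tendsto_natCast_atTop_atTop
  -- sqrt tends to infinity
  have hsqrtN : Tendsto Nat.sqrt atTop atTop := by
    apply Filter.tendsto_atTop_atTop.mpr
    intro b
    refine ⟨b * b, fun k hk => ?_⟩
    have := Nat.sqrt_le_sqrt hk
    rwa [Nat.sqrt_eq] at this
  have hsqrt : Tendsto (fun k : ℕ => (Nat.sqrt k : ℝ)) atTop atTop :=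
    tendsto_natCast_atTop_atTop.comp hsqrtN
  -- Htail (sqrt k) k tends to infinity
  have hHle : ∀ᶠ k : ℕ in atTop, Real.log k / 2 - 1 ≤ Htail (Nat.sqrt k) k := by
    filter_upwards [eventually_ge_atTop 1] with k hk
    have hm1 : 1 ≤ Nat.sqrt k := Nat.sqrt_pos.mpr hk
    have hmk : Nat.sqrt k ≤ k := Nat.sqrt_le_self k
    have hlow := htail_lower hm1 hmk
    have hk1 : (1:ℝ) ≤ (k:ℝ) := by exact_mod_cast hk
    have hmpos : (0:ℝ) < (Nat.sqrt k : ℝ) := by exact_mod_cast hm1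
    have hsq : ((Nat.sqrt k : ℝ)) ^ 2 ≤ (k:ℝ) := by exact_mod_cast Nat.sqrt_le' k
    have h2 : Real.log (((Nat.sqrt k : ℝ)) ^ 2) = 2 * Real.log (Nat.sqrt k) := by
      rw [Real.log_pow]; push_cast; ring
    have h3 : Real.log (((Nat.sqrt k : ℝ)) ^ 2) ≤ Real.log k :=
      Real.log_le_log (by positivity) hsq
    have h4 : Real.log k ≤ Real.log ((k:ℝ) + 1) := Real.log_le_log (by linarith) (by linarith)
    linarith
  have hH : Tendsto (fun k : ℕ => Htail (Nat.sqrt k) k) atTop atTop := by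
    apply tendsto_atTop_mono' _ hHle
    have h1 : Tendsto (fun k : ℕ => Real.log k / 2) atTop atTop :=
      hlogk.atTop_div_const (by norm_num)
    have := tendsto_atTop_add_const_right atTop (-1 : ℝ) h1
    simpa [sub_eq_add_neg] using this
  -- the square-sum tends to zero
  have hSnonneg : ∀ k : ℕ, 0 ≤ ∑ b ∈ Finset.Icc 1 k, (1 / ((b : ℝ) * (1 + Htail b k))) ^ 2 :=
    fun k => Finset.sum_nonneg fun b _ => sq_nonneg _
  have hG : Tendsto (fun k : ℕ =>
      2 / (1 + Htail (Nat.sqrt k) k) ^ 2 + 1 / (Nat.sqrt k : ℝ)) atTop (nhds 0) := by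
    have h1 : Tendsto (fun k : ℕ => 1 + Htail (Nat.sqrt k) k) atTop atTop :=
      tendsto_atTop_add_const_left atTop 1 hH
    have h2 : Tendsto (fun k : ℕ => (1 + Htail (Nat.sqrt k) k) ^ 2) atTop atTop := by
      have := h1.atTop_mul_atTop₀ h1
      simpa [sq] using this
    have h3 : Tendsto (fun k : ℕ => ((1 + Htail (Nat.sqrt k) k) ^ 2)⁻¹) atTop (nhds 0) :=
      h2.inv_tendsto_atTop
    have h4 : Tendsto (fun k : ℕ => 2 / (1 + Htail (Nat.sqrt k) k) ^ 2) atTop (nhds 0) := by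
      have := h3.const_mul (2:ℝ)
      simpa [div_eq_mul_inv] using this
    have h5 : Tendsto (fun k : ℕ => 1 / (Nat.sqrt k : ℝ)) atTop (nhds 0) := by
      have := hsqrt.inv_tendsto_atTop
      simp only [one_div]; exact this
    simpa using h4.add h5
  have hS0 : Tendsto (fun k : ℕ =>
      ∑ b ∈ Finset.Icc 1 k, (1 / ((b : ℝ) * (1 + Htail b k))) ^ 2) atTop (nhds 0) := by
    apply tendsto_of_tendsto_of_tendsto_of_le_of_le' tendsto_const_nhds hG
    · exact Eventually.of_forall hSnonneg
    · filter_upwards [eventually_ge_atTop 1] with k hk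
      exact S_bound hk
  have hinvlog : Tendsto (fun k : ℕ => 1 / (1 + Real.log k)) atTop (nhds 0) := by
    have := (tendsto_atTop_add_const_left atTop (1:ℝ) hlogk).inv_tendsto_atTop
    simp only [one_div]; exact this
  -- main squeeze
  have hupper : Tendsto (fun k : ℕ => 1 / (1 + Real.log k)
      + ∑ b ∈ Finset.Icc 1 k, (1 / ((b : ℝ) * (1 + Htail b k))) ^ 2) atTop (nhds 0) := by
    simpa using hinvlog.add hS0
  apply tendsto_of_tendsto_of_tendsto_of_le_of_le' tendsto_const_nhds hupper
  · -- lower bound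
    filter_upwards [eventually_ge_atTop 1] with k hk
    have hk1 : (1:ℝ) ≤ (k:ℝ) := by exact_mod_cast hk
    have hlog0 : 0 ≤ Real.log k := Real.log_nonneg hk1
    have hHt : Real.log k ≤ Htail 0 k := by
      rw [htail_eq 0 k (by omega)]
      have h1 := log_add_one_le_harmonic k
      have h2 : Real.log k ≤ Real.log ((k:ℝ) + 1) := Real.log_le_log (by linarith) (by linarith)
      push_cast at h1 ⊢
      simp [harmonic_zero]
      linarith
    have hmono : Real.log (1 + Real.log k) ≤ Real.log (1 + Htail 0 k) :=
      Real.log_le_log (by linarith) (by linarith)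
    have := theta_ge (k := k)
    simp only [sub_nonneg]
    linarith
  · -- upper bound
    filter_upwards [eventually_ge_atTop 1] with k hk
    have hk1 : (1:ℝ) ≤ (k:ℝ) := by exact_mod_cast hk
    have hlog0 : 0 ≤ Real.log k := Real.log_nonneg hk1
    have hu : (0:ℝ) < 1 + Real.log k := by linarith
    have hHt : Htail 0 k ≤ 1 + Real.log k := by
      rw [htail_eq 0 k (by omega)]
      have h2 : (harmonic k : ℝ) ≤ 1 + Real.log k := harmonic_le_one_add_log k
      simp [harmonic_zero]
      linarith
    have hA0 : (0:ℝ) < 1 + Htail 0 k := by have := htail_nonneg 0 k; linarith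
    have hmono : Real.log (1 + Htail 0 k) ≤ Real.log (1 + (1 + Real.log k)) :=
      Real.log_le_log hA0 (by linarith)
    have hstep : Real.log (1 + (1 + Real.log k)) - Real.log (1 + Real.log k)
        ≤ 1 / (1 + Real.log k) := by
      set u := 1 + Real.log k with hu'
      have h1 : Real.log (1 + u) - Real.log u = Real.log ((1 + u) / u) := by
        rw [Real.log_div (by linarith) (by linarith)]
      have h2 : Real.log ((1 + u) / u) ≤ (1 + u) / u - 1 :=
        Real.log_le_sub_one_of_pos (by positivity)
      have h3 : (1 + u) / u - 1 = 1 / u := by field_simp; ring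
      linarith
    have := theta_le (k := k)
    linarith
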